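/- arXiv:2605.22539 — 6 statements merged into one kernel-verified Lean document; each statement's English description precedes it below -/
import Mathlib

section
/- Let $\{\tau_k\}$ and $\{\beta_k\}$ be positive nonincreasing sequences with $\tau_k = \Theta(k^{-t_1})$ and $\beta_k = \Theta(k^{-t_2})$ for some $t_1 \in (0,1)$ and $t_2 > t_1$. If $\{\phi_k\}$ is a nonnegative real sequence satisfying $\phi_{k+1} \le (1-\tau_k)\phi_k + \beta_k$ for all $k \ge 0$, then $\phi_k = \mathcal{O}(k^{-(t_2-t_1)})$. -/
/-!
Since `τ k → 0` and `s (k+1)^(t₁-1) → 0` for `s = t₂ - t₁`, from some index `k₀` on we have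
`τ k ≤ 1` and `s (k+1)^(t₁-1) ≤ c/2`, where `c (k+1)^(-t₁) ≤ τ k`. From there on, for `M` large the
sequence `ψ k = M (k+1)^(-s)` is a supersolution of the recursion: the contraction
`τ k ψ k ≥ c M (k+1)^(-t₂)` beats both `β k ≤ C (k+1)^(-t₂)` and the decrease
`ψ k - ψ (k+1) ≤ M s (k+1)^(-s-1)` of the power. Enlarging `M` so that `φ k ≤ ψ k` for `k ≤ k₀`,
induction carries the bound to all `k`.
-/

open Real Filter Topology

lemma one_sub_mul_le_one_add_rpow_neg {x s : ℝ} (hx : -1 < x) (hs : 0 ≤ s) :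
    1 - s * x ≤ (1 + x) ^ (-s) := by
  have hx' : 0 < 1 + x := by linarith
  have hlog : s * log (1 + x) ≤ s * x := by
    gcongr
    linarith [log_le_sub_one_of_pos hx']
  calc 1 - s * x ≤ -(s * log (1 + x)) + 1 := by linarith
    _ ≤ exp (-(s * log (1 + x))) := add_one_le_exp _
    _ = (1 + x) ^ (-s) := by rw [rpow_def_of_pos hx', neg_mul_eq_neg_mul, mul_comm]

lemma rpow_neg_mul_one_sub_le_add_one_rpow_neg {a s : ℝ} (ha : 0 < a) (hs : 0 ≤ s) :
    a ^ (-s) * (1 - s * a⁻¹) ≤ (a + 1) ^ (-s) := by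
  have hsplit : (a + 1) ^ (-s) = a ^ (-s) * (1 + a⁻¹) ^ (-s) := by
    rw [← mul_rpow ha.le (by positivity), mul_add, mul_inv_cancel₀ ha.ne', mul_one]
  rw [hsplit]
  gcongr
  exact one_sub_mul_le_one_add_rpow_neg (by linarith [inv_pos.2 ha]) hs

lemma mul_rpow_neg_supersolution {a τ β c C M t₁ t₂ : ℝ} (ha : 0 < a) (ht : t₁ ≤ t₂)
    (hτ : c * a ^ (-t₁) ≤ τ) (hβ : β ≤ C * a ^ (-t₂)) (hM : 0 ≤ M) (hMC : 2 * C ≤ M * c)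
    (hsmall : (t₂ - t₁) * a ^ (t₁ - 1) ≤ c / 2) :
    (1 - τ) * (M * a ^ (-(t₂ - t₁))) + β ≤ M * (a + 1) ^ (-(t₂ - t₁)) := by
  set s := t₂ - t₁ with hs
  have hexp : a ^ (-t₁) * a ^ (-s) = a ^ (-t₂) := by
    rw [← rpow_add ha, hs]; ring_nf
  have hexp' : a ^ (-s) * a⁻¹ = a ^ (t₁ - 1) * a ^ (-t₂) := by
    rw [← rpow_neg_one, ← rpow_add ha, ← rpow_add ha, hs]; ring_nf
  have hdecay : M * (s * a ^ (t₁ - 1)) ≤ M * c - C := by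
    nlinarith [mul_le_mul_of_nonneg_left hsmall hM]
  calc (1 - τ) * (M * a ^ (-s)) + β
      ≤ (1 - c * a ^ (-t₁)) * (M * a ^ (-s)) + C * a ^ (-t₂) := by gcongr
    _ = M * a ^ (-s) - (M * c - C) * a ^ (-t₂) := by rw [← hexp]; ring
    _ ≤ M * a ^ (-s) - M * (s * a ^ (t₁ - 1)) * a ^ (-t₂) := by gcongr
    _ = M * (a ^ (-s) - s * (a ^ (t₁ - 1) * a ^ (-t₂))) := by ring
    _ ≤ M * (a + 1) ^ (-s) := by
      have hbern := rpow_neg_mul_one_sub_le_add_one_rpow_neg ha (by linarith : 0 ≤ s)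
      rw [mul_one_sub, mul_left_comm, hexp'] at hbern
      gcongr

lemma le_of_recursion_of_supersolution {φ ψ τ β : ℕ → ℝ} {k₀ : ℕ}
    (hrec : ∀ k, φ (k + 1) ≤ (1 - τ k) * φ k + β k) (hτ : ∀ k ≥ k₀, τ k ≤ 1)
    (hψ : ∀ k ≥ k₀, (1 - τ k) * ψ k + β k ≤ ψ (k + 1)) (hbase : ∀ k ≤ k₀, φ k ≤ ψ k) (k : ℕ) :
    φ k ≤ ψ k := by
  rcases le_total k k₀ with hk | hk
  · exact hbase k hk
  induction k, hk using Nat.le_induction with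
  | base => exact hbase k₀ le_rfl
  | succ k hk ih =>
    calc φ (k + 1) ≤ (1 - τ k) * φ k + β k := hrec k
      _ ≤ (1 - τ k) * ψ k + β k := by gcongr; linarith [hτ k hk]
      _ ≤ ψ (k + 1) := hψ k hk

lemma exists_ge_forall_le_mul {f g : ℕ → ℝ} (hg : ∀ k, 0 < g k) (k₀ : ℕ) (M₀ : ℝ) :
    ∃ M ≥ M₀, ∀ k ≤ k₀, f k ≤ M * g k := by
  obtain ⟨B, hB⟩ := ((Set.finite_Iic k₀).image fun k => f k / g k).bddAbove
  refine ⟨max M₀ B, le_max_left _ _, fun k hk => ?_⟩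
  have hfB : f k / g k ≤ max M₀ B := (hB ⟨k, hk, rfl⟩).trans (le_max_right _ _)
  rwa [div_le_iff₀ (hg k)] at hfB

lemma tendsto_natCast_add_one_rpow_atTop_zero {p : ℝ} (hp : p < 0) :
    Tendsto (fun k : ℕ => ((k : ℝ) + 1) ^ p) atTop (𝓝 0) := by
  have h := tendsto_rpow_neg_atTop (neg_pos.2 hp)
  rw [neg_neg] at h
  exact h.comp (tendsto_atTop_add_const_right atTop 1 tendsto_natCast_atTop_atTop)

theorem stmt0_general (τ β φ : ℕ → ℝ) (t₁ t₂ : ℝ)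
    (ht₁ : 0 < t₁) (ht₁' : t₁ < 1) (ht₂ : t₁ < t₂)
    (hτΘ : ∃ c C : ℝ, 0 < c ∧ c ≤ C ∧ ∀ k : ℕ,
      c * ((k : ℝ) + 1) ^ (-t₁) ≤ τ k ∧ τ k ≤ C * ((k : ℝ) + 1) ^ (-t₁))
    (hβΘ : ∃ c C : ℝ, 0 < c ∧ c ≤ C ∧ ∀ k : ℕ,
      c * ((k : ℝ) + 1) ^ (-t₂) ≤ β k ∧ β k ≤ C * ((k : ℝ) + 1) ^ (-t₂))
    (hrec : ∀ k, φ (k + 1) ≤ (1 - τ k) * φ k + β k) :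
    ∃ M : ℝ, ∀ k : ℕ, φ k ≤ M * ((k : ℝ) + 1) ^ (-(t₂ - t₁)) := by
  obtain ⟨c, C₁, hc, -, hτb⟩ := hτΘ
  obtain ⟨_, C, _, _, hβb⟩ := hβΘ
  have hτ_small : ∀ᶠ k : ℕ in atTop, τ k ≤ 1 := by
    filter_upwards [((tendsto_natCast_add_one_rpow_atTop_zero (neg_lt_zero.2 ht₁)).const_mul
      C₁).eventually_lt_const (by norm_num : C₁ * (0 : ℝ) < 1)] with k hk
    exact ((hτb k).2.trans hk.le)
  have hstep_small : ∀ᶠ k : ℕ in atTop, (t₂ - t₁) * ((k : ℝ) + 1) ^ (t₁ - 1) ≤ c / 2 := by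
    filter_upwards [((tendsto_natCast_add_one_rpow_atTop_zero (by linarith : t₁ - 1 < 0)).const_mul
      (t₂ - t₁)).eventually_lt_const (by linarith : (t₂ - t₁) * (0 : ℝ) < c / 2)] with k hk
    exact hk.le
  obtain ⟨k₀, hk₀⟩ := eventually_atTop.mp (hτ_small.and hstep_small)
  obtain ⟨M, hM, hbase⟩ := exists_ge_forall_le_mul (f := φ)
    (g := fun k => ((k : ℝ) + 1) ^ (-(t₂ - t₁))) (fun k => by positivity) k₀ (max (2 * C / c) 0)
  refine ⟨M, le_of_recursion_of_supersolution hrec (fun k hk => (hk₀ k hk).1) (fun k hk => ?_) hbase⟩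
  have hMC : 2 * C ≤ M * c := (div_le_iff₀ hc).1 ((le_max_left _ _).trans hM)
  have h := mul_rpow_neg_supersolution (by positivity) ht₂.le (hτb k).1 (hβb k).2
    ((le_max_right _ _).trans hM) hMC (hk₀ k hk).2
  push_cast
  exact h

/-- If `τ` and `β` are positive nonincreasing sequences with
`τ k = Θ(k^{-t₁})`, `β k = Θ(k^{-t₂})`, `t₁ ∈ (0,1)`, `t₂ > t₁`, and `φ` is a
nonnegative sequence with `φ (k+1) ≤ (1 - τ k) * φ k + β k` for all `k`, then
`φ k = O(k^{-(t₂ - t₁)})`. -/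
theorem stmt0 (τ β φ : ℕ → ℝ) (t₁ t₂ : ℝ)
    (ht₁ : 0 < t₁) (ht₁' : t₁ < 1) (ht₂ : t₁ < t₂)
    (hτpos : ∀ k, 0 < τ k) (hτmono : ∀ k, τ (k + 1) ≤ τ k)
    (hβpos : ∀ k, 0 < β k) (hβmono : ∀ k, β (k + 1) ≤ β k)
    (hτΘ : ∃ c C : ℝ, 0 < c ∧ c ≤ C ∧ ∀ k : ℕ,
      c * ((k : ℝ) + 1) ^ (-t₁) ≤ τ k ∧ τ k ≤ C * ((k : ℝ) + 1) ^ (-t₁))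
    (hβΘ : ∃ c C : ℝ, 0 < c ∧ c ≤ C ∧ ∀ k : ℕ,
      c * ((k : ℝ) + 1) ^ (-t₂) ≤ β k ∧ β k ≤ C * ((k : ℝ) + 1) ^ (-t₂))
    (hφ : ∀ k, 0 ≤ φ k)
    (hrec : ∀ k, φ (k + 1) ≤ (1 - τ k) * φ k + β k) :
    ∃ M : ℝ, ∀ k : ℕ, φ k ≤ M * ((k : ℝ) + 1) ^ (-(t₂ - t₁)) :=
  stmt0_general τ β φ t₁ t₂ ht₁ ht₁' ht₂ hτΘ hβΘ hrec
end

section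
/- Let $\{\gamma_k\}$ be a positive nonincreasing sequence, $\eta \in [1/2, 1)$ and $\mu \in (0,1]$. Suppose $\gamma_k \to 0$ and $\sup_k \gamma_k^{-1}(\gamma_k^{1/(1+\mu)} - \gamma_{k+1}^{1/(1+\mu)}) < \infty$. If $\{\phi_k\}$ is a nonnegative sequence satisfying $\phi_{k+1} \le \phi_k \max\{\eta, 1 - \phi_k^{\mu}\} + \gamma_k$ for all $k \ge 0$, then $\phi_k = \mathcal{O}(\gamma_k^{1/(1+\mu)})$. -/
open Filter Finset

set_option maxHeartbeats 1000000 in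
/-- difference inequality with the short-stepsize structure:
`φ (k+1) ≤ φ k * max η (1 - φ k ^ μ) + γ k` with `γ` positive nonincreasing
tending to zero and `sup_k γ k⁻¹ * (γ k ^ (1/(1+μ)) - γ (k+1) ^ (1/(1+μ))) < ∞`
implies `φ k = O(γ k ^ (1/(1+μ)))`. -/
theorem stmt1 (γ φ : ℕ → ℝ) (η μ : ℝ)
    (hη : 1 / 2 ≤ η) (hη' : η < 1) (hμ : 0 < μ) (hμ' : μ ≤ 1)
    (hγpos : ∀ k, 0 < γ k) (hγmono : ∀ k, γ (k + 1) ≤ γ k)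
    (hγ0 : Filter.Tendsto γ Filter.atTop (nhds 0))
    (hγsup : ∃ B : ℝ, ∀ k,
      (γ k)⁻¹ * (γ k ^ (1 / (1 + μ)) - γ (k + 1) ^ (1 / (1 + μ))) ≤ B)
    (hφ : ∀ k, 0 ≤ φ k)
    (hrec : ∀ k, φ (k + 1) ≤ φ k * max η (1 - φ k ^ μ) + γ k) :
    ∃ M : ℝ, 0 < M ∧ ∃ K : ℕ, ∀ k ≥ K, φ k ≤ M * γ k ^ (1 / (1 + μ)) := by
  obtain ⟨B, hB⟩ := hγsup
  have hμ1 : (0:ℝ) < 1 + μ := by linarith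
  obtain ⟨ψ, hψdef⟩ : ∃ ψ : ℕ → ℝ, ∀ k, ψ k = γ k ^ (1 / (1 + μ)) :=
    ⟨_, fun _ => rfl⟩
  have hψpos : ∀ k, 0 < ψ k := fun k => by
    rw [hψdef]; exact Real.rpow_pos_of_pos (hγpos k) _
  have hγψ : ∀ k, γ k = ψ k ^ μ * ψ k := by
    intro k
    have h1 : ψ k ^ μ * ψ k = ψ k ^ (μ + 1) := by
      rw [Real.rpow_add (hψpos k), Real.rpow_one]
    have h2 : (γ k ^ (1/(1+μ)) : ℝ) ^ (μ + 1) = γ k ^ ((1/(1+μ)) * (μ + 1)) := by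
      rw [← Real.rpow_mul (hγpos k).le]
    have h3 : (1/(1+μ)) * (μ + 1) = 1 := by field_simp; ring
    rw [h1, hψdef, h2, h3, Real.rpow_one]
  have hψmono : ∀ k, ψ (k + 1) ≤ ψ k := fun k => by
    rw [hψdef, hψdef]
    exact Real.rpow_le_rpow (hγpos (k+1)).le (hγmono k) (by positivity)
  -- the constant B'
  obtain ⟨B', hB'def⟩ : ∃ x : ℝ, x = max B 0 + 1 := ⟨_, rfl⟩
  have hB'1 : (1:ℝ) ≤ B' := by
    rw [hB'def]; have := le_max_right B (0:ℝ); linarith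
  have hB'pos : (0:ℝ) < B' := by linarith
  have hstep : ∀ k, ψ k - ψ (k + 1) ≤ B' * (ψ k ^ μ * ψ k) := by
    intro k
    have h1 := hB k
    rw [← hψdef, ← hψdef] at h1
    have h2 : ψ k - ψ (k + 1) ≤ B * γ k := by
      have := mul_le_mul_of_nonneg_left h1 (hγpos k).le
      rw [← mul_assoc, mul_inv_cancel₀ (hγpos k).ne', one_mul] at this
      linarith [this]
    have h3 : B * γ k ≤ B' * γ k := by
      apply mul_le_mul_of_nonneg_right _ (hγpos k).le
      have : B ≤ max B 0 := le_max_left _ _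
      linarith
    calc ψ k - ψ (k+1) ≤ B' * γ k := h2.trans h3
      _ = B' * (ψ k ^ μ * ψ k) := by rw [← hγψ]
  have hψsucc : ∀ k, ψ k * (1 - B' * ψ k ^ μ) ≤ ψ (k + 1) := by
    intro k
    have h := hstep k
    have e : ψ k * (1 - B' * ψ k ^ μ) = ψ k - B' * (ψ k ^ μ * ψ k) := by ring
    rw [e]
    linarith
  have hψμpos : ∀ k, 0 < ψ k ^ μ := fun k => Real.rpow_pos_of_pos (hψpos k) _
  -- ε, ρ, M, c, η'
  have hη0 : (0:ℝ) < 1 - η := by linarith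
  have hrpow_inv : ∀ x : ℝ, 0 < x → (x ^ (1/μ)) ^ μ = x := by
    intro x hx
    rw [← Real.rpow_mul hx.le, one_div, inv_mul_cancel₀ hμ.ne', Real.rpow_one]
  obtain ⟨ε, hεdef⟩ : ∃ x : ℝ, x = (1 - η) ^ (1/μ) := ⟨_, rfl⟩
  have hεpos : 0 < ε := by rw [hεdef]; exact Real.rpow_pos_of_pos hη0 _
  have hεμ : ε ^ μ = 1 - η := by rw [hεdef]; exact hrpow_inv _ hη0
  obtain ⟨ρ, hρdef⟩ : ∃ x : ℝ, x = (B' + 1) ^ (1/μ) := ⟨_, rfl⟩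
  have hρpos : 0 < ρ := by rw [hρdef]; exact Real.rpow_pos_of_pos (by linarith) _
  have hρμ : ρ ^ μ = B' + 1 := by rw [hρdef]; exact hrpow_inv _ (by linarith)
  obtain ⟨M, hMdef⟩ : ∃ x : ℝ, x = ρ + 1 := ⟨_, rfl⟩
  have hM1 : 1 < M := by rw [hMdef]; linarith
  have hMpos : 0 < M := by linarith
  obtain ⟨P, hPdef⟩ : ∃ x : ℝ, x = M ^ μ := ⟨_, rfl⟩
  have hPpos : 0 < P := by rw [hPdef]; exact Real.rpow_pos_of_pos hMpos _
  have hPlb : B' + 1 ≤ P := by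
    rw [hPdef, ← hρμ]
    exact Real.rpow_le_rpow hρpos.le (by rw [hMdef]; linarith) hμ.le
  obtain ⟨c, hcdef⟩ : ∃ x : ℝ, x = P - 1 / M := ⟨_, rfl⟩
  have hMinv1 : 1 / M ≤ 1 := by rw [div_le_one hMpos]; linarith
  have hMinvpos : 0 < 1 / M := by positivity
  have hcB : B' + (1 - 1/M) ≤ c := by rw [hcdef]; linarith
  have hcB' : 0 < c - B' := by
    have : 1/M < 1 := by rw [div_lt_one hMpos]; linarith
    linarith
  have hcpos : 0 < c := by linarith
  have hcleP : c ≤ P := by rw [hcdef]; linarith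
  obtain ⟨η'', hη''def⟩ : ∃ x : ℝ, x = (1 + η) / 2 := ⟨_, rfl⟩
  have hη''lt : η'' < 1 := by rw [hη''def]; linarith
  have hηη'' : η < η'' := by rw [hη''def]; linarith
  have hη''pos : 0 < η'' := by rw [hη''def]; linarith
  -- smallness threshold s
  have hMB'pos : (0:ℝ) < 1 + M * B' := by positivity
  obtain ⟨s, hspos, hs1, hs2, hs3, hs4, hs5, hs6⟩ :
      ∃ s : ℝ, 0 < s ∧ s ≤ (B' + 1)⁻¹ ∧ s ≤ (1 + M * B')⁻¹ ∧
        s ≤ M * (1 - η) / (1 + M * B') ∧ s ≤ P⁻¹ ∧ s ≤ (2 * B')⁻¹ ∧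
        s ≤ ((1 - η) / 2) / (1 / M + B') := by
    refine ⟨min (min (min (B' + 1)⁻¹ (1 + M * B')⁻¹)
      (min (M * (1 - η) / (1 + M * B')) P⁻¹))
      (min (2 * B')⁻¹ (((1 - η) / 2) / (1 / M + B'))), ?_, ?_, ?_, ?_, ?_, ?_, ?_⟩
    · refine lt_min (lt_min (lt_min ?_ ?_) (lt_min ?_ ?_)) (lt_min ?_ ?_) <;> positivity
    · exact le_trans (min_le_left _ _) (le_trans (min_le_left _ _) (min_le_left _ _))
    · exact le_trans (min_le_left _ _) (le_trans (min_le_left _ _) (min_le_right _ _))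
    · exact le_trans (min_le_left _ _) (le_trans (min_le_right _ _) (min_le_left _ _))
    · exact le_trans (min_le_left _ _) (le_trans (min_le_right _ _) (min_le_right _ _))
    · exact le_trans (min_le_right _ _) (min_le_left _ _)
    · exact le_trans (min_le_right _ _) (min_le_right _ _)
  -- K : eventually ψ k ^ μ ≤ s
  obtain ⟨K, hK⟩ : ∃ K, ∀ k ≥ K, ψ k ^ μ ≤ s := by
    have hψ0 : Tendsto ψ atTop (nhds 0) := by
      have h := hγ0.rpow_const (Or.inr (by positivity : (0:ℝ) ≤ 1 / (1+μ)))
      rw [Real.zero_rpow (by positivity : (0:ℝ) < 1/(1+μ)).ne'] at h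
      have e : (fun k => γ k ^ (1/(1+μ))) = ψ := funext fun k => (hψdef k).symm
      rwa [e] at h
    have hψμ0 : Tendsto (fun k => ψ k ^ μ) atTop (nhds 0) := by
      have h := hψ0.rpow_const (Or.inr hμ.le)
      simpa [Real.zero_rpow hμ.ne'] using h
    exact Filter.eventually_atTop.1 (hψμ0.eventually_le_const hspos)
  have hhalf : ∀ k ≥ K, B' * ψ k ^ μ ≤ 1/2 := by
    intro k hk
    have h1 : ψ k ^ μ ≤ (2*B')⁻¹ := (hK k hk).trans hs5
    have h2 := mul_le_mul_of_nonneg_left h1 hB'pos.le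
    calc B' * ψ k ^ μ ≤ B' * (2*B')⁻¹ := h2
      _ = 1/2 := by field_simp
  -- maintenance
  have hmain : ∀ k, K ≤ k → φ k ≤ M * ψ k → φ (k + 1) ≤ M * ψ (k + 1) := by
    intro k hk hφk
    have hx : 0 < ψ k := hψpos k
    have hxμ : 0 < ψ k ^ μ := hψμpos k
    have hxs : ψ k ^ μ ≤ s := hK k hk
    have hrec' : φ (k + 1) ≤ φ k * max η (1 - φ k ^ μ) + ψ k ^ μ * ψ k := by
      have h := hrec k; rw [hγψ k] at h; exact h
    have htarget : M * (ψ k * (1 - B' * ψ k ^ μ)) ≤ M * ψ (k + 1) :=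
      mul_le_mul_of_nonneg_left (hψsucc k) hMpos.le
    have hφμ0 : 0 ≤ φ k ^ μ := Real.rpow_nonneg (hφ k) μ
    refine le_trans ?_ htarget
    by_cases hcase1 : φ k ≤ ρ * ψ k
    · -- Case B
      have hfac : φ k * max η (1 - φ k ^ μ) ≤ φ k := by
        apply mul_le_of_le_one_right (hφ k)
        exact max_le hη'.le (by linarith)
      have h2 : (1 + M * B') * ψ k ^ μ ≤ 1 := by
        have h := mul_le_mul_of_nonneg_left (hxs.trans hs2) hMB'pos.le
        rwa [mul_inv_cancel₀ hMB'pos.ne'] at h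
      have hp1 : (1 + M * B') * ψ k ^ μ * ψ k ≤ 1 * ψ k :=
        mul_le_mul_of_nonneg_right h2 hx.le
      have e : M * (ψ k * (1 - B' * ψ k ^ μ))
          = ρ * ψ k + ψ k - (1 + M * B') * ψ k ^ μ * ψ k + ψ k ^ μ * ψ k := by
        rw [hMdef]; ring
      rw [e]
      linarith
    · push_neg at hcase1
      by_cases hcase2 : φ k ≤ ε
      · -- Case A
        have hfac : max η (1 - φ k ^ μ) = 1 - φ k ^ μ := by
          apply max_eq_right
          have h : φ k ^ μ ≤ ε ^ μ := Real.rpow_le_rpow (hφ k) hcase2 hμ.le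
          rw [hεμ] at h; linarith
        rw [hfac] at hrec'
        have hφμlb : (B' + 1) * ψ k ^ μ ≤ φ k ^ μ := by
          rw [← hρμ, ← Real.mul_rpow hρpos.le hx.le]
          exact Real.rpow_le_rpow (by positivity) hcase1.le hμ.le
        have hnn : 0 ≤ 1 - (B' + 1) * ψ k ^ μ := by
          have h : (B' + 1) * ψ k ^ μ ≤ 1 := by
            have h := mul_le_mul_of_nonneg_left (hxs.trans hs1)
              (by linarith : (0:ℝ) ≤ B' + 1)
            rwa [mul_inv_cancel₀ (by linarith : (B':ℝ) + 1 ≠ 0)] at h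
          linarith
        have ha1 : φ k * (1 - φ k ^ μ) ≤ φ k * (1 - (B' + 1) * ψ k ^ μ) :=
          mul_le_mul_of_nonneg_left (by linarith) (hφ k)
        have ha2 : φ k * (1 - (B' + 1) * ψ k ^ μ) ≤ (M * ψ k) * (1 - (B' + 1) * ψ k ^ μ) :=
          mul_le_mul_of_nonneg_right hφk hnn
        have hYM : 1 * (ψ k ^ μ * ψ k) ≤ M * (ψ k ^ μ * ψ k) :=
          mul_le_mul_of_nonneg_right hM1.le (by positivity)
        have e : M * (ψ k * (1 - B' * ψ k ^ μ))
            = (M * ψ k) * (1 - (B' + 1) * ψ k ^ μ) + M * (ψ k ^ μ * ψ k) := by ring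
        rw [e]
        linarith
      · -- Case C
        push_neg at hcase2
        have hfac : max η (1 - φ k ^ μ) = η := by
          apply max_eq_left
          have h : ε ^ μ ≤ φ k ^ μ := Real.rpow_le_rpow hεpos.le hcase2.le hμ.le
          rw [hεμ] at h; linarith
        rw [hfac] at hrec'
        have h2 : (1 + M * B') * ψ k ^ μ ≤ M * (1 - η) := by
          have h := mul_le_mul_of_nonneg_left (hxs.trans hs3) hMB'pos.le
          rwa [mul_div_cancel₀ _ hMB'pos.ne'] at h
        have hp1 : (1 + M * B') * ψ k ^ μ * ψ k ≤ (M * (1 - η)) * ψ k :=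
          mul_le_mul_of_nonneg_right h2 hx.le
        have h3 : φ k * η ≤ (M * ψ k) * η :=
          mul_le_mul_of_nonneg_right hφk (by linarith)
        have e : M * (ψ k * (1 - B' * ψ k ^ μ))
            = (M * ψ k) * η + (M * (1 - η)) * ψ k
              - (1 + M * B') * ψ k ^ μ * ψ k + ψ k ^ μ * ψ k := by ring
        rw [e]
        linarith
  -- existence of a base point
  have hbase : ∃ k0, K ≤ k0 ∧ φ k0 ≤ M * ψ k0 := by
    by_contra hcon
    push_neg at hcon
    obtain ⟨r, hrdef⟩ : ∃ r : ℕ → ℝ, ∀ k, r k = φ k / ψ k := ⟨_, fun _ => rfl⟩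
    have hrpos : ∀ k, 0 ≤ r k := fun k => by
      rw [hrdef]; exact div_nonneg (hφ k) (hψpos k).le
    have hrM : ∀ k, K ≤ k → M < r k := by
      intro k hk
      rw [hrdef, lt_div_iff₀ (hψpos k)]
      exact hcon k hk
    obtain ⟨a, hadef⟩ : ∃ x : ℝ, x = min ((c - B') * M) ((1 - η'') * M / s) := ⟨_, rfl⟩
    have ha1 : a ≤ (c - B') * M := by rw [hadef]; exact min_le_left _ _
    have ha2 : a ≤ (1 - η'') * M / s := by rw [hadef]; exact min_le_right _ _
    have hapos : 0 < a := by
      rw [hadef]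
      apply lt_min
      · positivity
      · have h : (0:ℝ) < 1 - η'' := by linarith
        positivity
    -- decrement
    have hdec : ∀ k, K ≤ k → r (k + 1) ≤ r k - a * ψ k ^ μ := by
      intro k hk
      have hx : 0 < ψ k := hψpos k
      have hxμ : 0 < ψ k ^ μ := hψμpos k
      have hxs : ψ k ^ μ ≤ s := hK k hk
      have hMψφ : M * ψ k < φ k := hcon k hk
      have hφpos : 0 < φ k := lt_of_le_of_lt (by positivity) hMψφ
      have hdenom : (0:ℝ) < 1 - B' * ψ k ^ μ := by
        have h := hhalf k hk; linarith
      have hψ1pos : 0 < ψ (k+1) := hψpos (k+1)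
      have hrec' : φ (k + 1) ≤ φ k * max η (1 - φ k ^ μ) + ψ k ^ μ * ψ k := by
        have h := hrec k; rw [hγψ k] at h; exact h
      have hrk : M < r k := hrM k hk
      have hψφM : ψ k ^ μ * ψ k ≤ ψ k ^ μ * (φ k / M) := by
        apply mul_le_mul_of_nonneg_left _ hxμ.le
        rw [le_div_iff₀ hMpos, mul_comm]
        linarith
      by_cases hcase2 : φ k ≤ ε
      · -- contraction case
        have hfac : max η (1 - φ k ^ μ) = 1 - φ k ^ μ := by
          apply max_eq_right
          have h : φ k ^ μ ≤ ε ^ μ := Real.rpow_le_rpow (hφ k) hcase2 hμ.le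
          rw [hεμ] at h; linarith
        rw [hfac] at hrec'
        have hφμlb : P * ψ k ^ μ ≤ φ k ^ μ := by
          rw [hPdef, ← Real.mul_rpow hMpos.le hx.le]
          exact Real.rpow_le_rpow (by positivity) hMψφ.le hμ.le
        have ha1' : φ k * (1 - φ k ^ μ) ≤ φ k * (1 - P * ψ k ^ μ) :=
          mul_le_mul_of_nonneg_left (by linarith) (hφ k)
        have e1 : φ k * (1 - P * ψ k ^ μ) + ψ k ^ μ * (φ k / M)
            = φ k * (1 - c * ψ k ^ μ) := by
          rw [hcdef]; ring
        have h1 : φ (k + 1) ≤ φ k * (1 - c * ψ k ^ μ) := by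
          rw [← e1]; linarith
        have hnum : 0 ≤ 1 - c * ψ k ^ μ := by
          have h4 : c * ψ k ^ μ ≤ P * ψ k ^ μ :=
            mul_le_mul_of_nonneg_right hcleP hxμ.le
          have h5 : P * ψ k ^ μ ≤ 1 := by
            have h := mul_le_mul_of_nonneg_left (hxs.trans hs4) hPpos.le
            rwa [mul_inv_cancel₀ hPpos.ne'] at h
          linarith
        have hr1 : r (k + 1) ≤ (φ k * (1 - c * ψ k ^ μ)) / (ψ k * (1 - B' * ψ k ^ μ)) := by
          rw [hrdef]
          apply div_le_div₀ (by positivity) h1 (by positivity) (hψsucc k)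
        have hfrac : (1 - c * ψ k ^ μ) / (1 - B' * ψ k ^ μ) ≤ 1 - (c - B') * ψ k ^ μ := by
          rw [div_le_iff₀ hdenom]
          have hq : 0 ≤ B' * ((c - B') * (ψ k ^ μ * ψ k ^ μ)) := by positivity
          have e : (1 - (c - B') * ψ k ^ μ) * (1 - B' * ψ k ^ μ)
              = 1 - c * ψ k ^ μ + B' * ((c - B') * (ψ k ^ μ * ψ k ^ μ)) := by ring
          rw [e]
          linarith
        have e2 : (φ k * (1 - c * ψ k ^ μ)) / (ψ k * (1 - B' * ψ k ^ μ))
            = (φ k / ψ k) * ((1 - c * ψ k ^ μ) / (1 - B' * ψ k ^ μ)) := by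
          field_simp
        have hr2 : r (k + 1) ≤ r k * (1 - (c - B') * ψ k ^ μ) := by
          rw [e2] at hr1
          refine hr1.trans ?_
          rw [hrdef]
          exact mul_le_mul_of_nonneg_left hfrac (div_nonneg (hφ k) hx.le)
        have hp1 : (c - B') * ψ k ^ μ * M ≤ (c - B') * ψ k ^ μ * r k :=
          mul_le_mul_of_nonneg_left hrk.le (by positivity)
        have hp2 : a * ψ k ^ μ ≤ ((c - B') * M) * ψ k ^ μ :=
          mul_le_mul_of_nonneg_right ha1 hxμ.le
        have e3 : r k * (1 - (c - B') * ψ k ^ μ)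
            = r k - (c - B') * ψ k ^ μ * r k := by ring
        rw [e3] at hr2
        have e4 : ((c - B') * M) * ψ k ^ μ = (c - B') * ψ k ^ μ * M := by ring
        rw [e4] at hp2
        linarith
      · -- geometric case
        push_neg at hcase2
        have hfac : max η (1 - φ k ^ μ) = η := by
          apply max_eq_left
          have h : ε ^ μ ≤ φ k ^ μ := Real.rpow_le_rpow hεpos.le hcase2.le hμ.le
          rw [hεμ] at h; linarith
        rw [hfac] at hrec'
        have e1 : φ k * η + ψ k ^ μ * (φ k / M) = φ k * (η + ψ k ^ μ * (1/M)) := by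
          ring
        have h1 : φ (k + 1) ≤ φ k * (η + ψ k ^ μ * (1/M)) := by
          rw [← e1]; linarith
        have h5 : (1 / M + B') * ψ k ^ μ ≤ (1 - η) / 2 := by
          have hpos : (0:ℝ) < 1 / M + B' := by positivity
          have h := mul_le_mul_of_nonneg_left (hxs.trans hs6) hpos.le
          rwa [mul_div_cancel₀ _ hpos.ne'] at h
        have hp : η'' * (B' * ψ k ^ μ) ≤ 1 * (B' * ψ k ^ μ) :=
          mul_le_mul_of_nonneg_right hη''lt.le (by positivity)
        have h4 : η + ψ k ^ μ * (1/M) ≤ η'' * (1 - B' * ψ k ^ μ) := by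
          have e5 : η'' * (1 - B' * ψ k ^ μ) = η'' - η'' * (B' * ψ k ^ μ) := by ring
          rw [e5, hη''def] at *
          linarith
        have h2 : φ (k + 1) ≤ φ k * (η'' * (1 - B' * ψ k ^ μ)) :=
          h1.trans (mul_le_mul_of_nonneg_left h4 (hφ k))
        have hr1 : r (k + 1) ≤ (φ k * (η'' * (1 - B' * ψ k ^ μ))) / (ψ k * (1 - B' * ψ k ^ μ)) := by
          rw [hrdef]
          apply div_le_div₀ (by positivity) h2 (by positivity) (hψsucc k)
        have e2 : (φ k * (η'' * (1 - B' * ψ k ^ μ))) / (ψ k * (1 - B' * ψ k ^ μ))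
            = η'' * (φ k / ψ k) := by
          rw [mul_comm (φ k) (η'' * (1 - B' * ψ k ^ μ)), mul_comm (ψ k) (1 - B' * ψ k ^ μ),
            mul_assoc, mul_div_assoc, mul_div_mul_left _ _ hdenom.ne']
        rw [e2, ← hrdef] at hr1
        -- a * ψ^μ ≤ (1-η'') * M ≤ (1-η'') * r k
        have hp2 : a * ψ k ^ μ ≤ ((1 - η'') * M / s) * ψ k ^ μ :=
          mul_le_mul_of_nonneg_right ha2 hxμ.le
        have hp3 : ((1 - η'') * M / s) * ψ k ^ μ ≤ ((1 - η'') * M / s) * s := by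
          apply mul_le_mul_of_nonneg_left hxs
          have h : (0:ℝ) < 1 - η'' := by linarith
          positivity
        have e3 : ((1 - η'') * M / s) * s = (1 - η'') * M :=
          div_mul_cancel₀ _ hspos.ne'
        have hp4 : (1 - η'') * M ≤ (1 - η'') * r k :=
          mul_le_mul_of_nonneg_left hrk.le (by linarith)
        have e5 : (1 - η'') * r k = r k - η'' * r k := by ring
        linarith [hr1, hp2, hp3, hp4, e3, e5]
    -- telescoping
    have htel : ∀ n, r (K + n) ≤ r K - a * ∑ i ∈ Finset.range n, ψ (K + i) ^ μ := by
      intro n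
      induction n with
      | zero => simp
      | succ n ih =>
        have h1 := hdec (K + n) (Nat.le_add_right K n)
        rw [Finset.sum_range_succ]
        have e : K + (n + 1) = (K + n) + 1 := by ring
        rw [e]
        have e2 : a * (∑ i ∈ Finset.range n, ψ (K + i) ^ μ + ψ (K + n) ^ μ)
            = a * ∑ i ∈ Finset.range n, ψ (K + i) ^ μ + a * ψ (K + n) ^ μ := by ring
        rw [e2]
        linarith
    -- lower bound on ψ^μ
    have hy : ∀ n, (ψ (K + n) ^ μ)⁻¹ ≤ (ψ K ^ μ)⁻¹ + 2 * B' * n := by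
      intro n
      induction n with
      | zero => simp
      | succ n ih =>
        have hk : K ≤ K + n := Nat.le_add_right K n
        have hx : 0 < ψ (K + n) := hψpos (K + n)
        have hxμ : 0 < ψ (K + n) ^ μ := hψμpos (K + n)
        have hdenom : (0:ℝ) < 1 - B' * ψ (K + n) ^ μ := by
          have h := hhalf (K + n) hk; linarith
        have h1 : ψ (K + n) ^ μ * (1 - B' * ψ (K + n) ^ μ) ≤ ψ (K + n + 1) ^ μ := by
          have h2 : (ψ (K + n) * (1 - B' * ψ (K + n) ^ μ)) ^ μ ≤ ψ (K + n + 1) ^ μ :=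
            Real.rpow_le_rpow (by positivity) (hψsucc (K + n)) hμ.le
          have h3 : (ψ (K + n) * (1 - B' * ψ (K + n) ^ μ)) ^ μ
              = ψ (K + n) ^ μ * (1 - B' * ψ (K + n) ^ μ) ^ μ :=
            Real.mul_rpow hx.le hdenom.le
          have h4 : (1 - B' * ψ (K + n) ^ μ) ^ (1:ℝ) ≤ (1 - B' * ψ (K + n) ^ μ) ^ μ := by
            apply Real.rpow_le_rpow_of_exponent_ge hdenom _ hμ'
            have : 0 ≤ B' * ψ (K + n) ^ μ := by positivity
            linarith
          rw [Real.rpow_one] at h4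
          have h6 : ψ (K + n) ^ μ * (1 - B' * ψ (K + n) ^ μ)
              ≤ ψ (K + n) ^ μ * (1 - B' * ψ (K + n) ^ μ) ^ μ :=
            mul_le_mul_of_nonneg_left h4 hxμ.le
          rw [← h3] at h6
          exact h6.trans h2
        have h5 : (ψ (K + n + 1) ^ μ)⁻¹ ≤ (ψ (K + n) ^ μ * (1 - B' * ψ (K + n) ^ μ))⁻¹ :=
          inv_anti₀ (by positivity) h1
        have h7 : (1 - B' * ψ (K + n) ^ μ)⁻¹ ≤ 1 + 2 * B' * ψ (K + n) ^ μ := by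
          rw [inv_eq_one_div, div_le_iff₀ hdenom]
          have hq : 0 ≤ (B' * ψ (K + n) ^ μ) * (1 - 2 * (B' * ψ (K + n) ^ μ)) := by
            apply mul_nonneg (by positivity)
            have h := hhalf (K + n) hk
            linarith
          have e : (1 + 2 * B' * ψ (K + n) ^ μ) * (1 - B' * ψ (K + n) ^ μ)
              = 1 + (B' * ψ (K + n) ^ μ) * (1 - 2 * (B' * ψ (K + n) ^ μ)) := by ring
          rw [e]
          linarith
        have h6 : (ψ (K + n) ^ μ * (1 - B' * ψ (K + n) ^ μ))⁻¹
            ≤ (ψ (K + n) ^ μ)⁻¹ + 2 * B' := by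
          rw [mul_inv]
          have h8 : (ψ (K + n) ^ μ)⁻¹ * (1 - B' * ψ (K + n) ^ μ)⁻¹
              ≤ (ψ (K + n) ^ μ)⁻¹ * (1 + 2 * B' * ψ (K + n) ^ μ) :=
            mul_le_mul_of_nonneg_left h7 (by positivity)
          have e6 : (ψ (K + n) ^ μ)⁻¹ * (1 + 2 * B' * ψ (K + n) ^ μ)
              = (ψ (K + n) ^ μ)⁻¹ + 2 * B' := by
            field_simp
          rw [e6] at h8
          exact h8
        have e : K + (n + 1) = K + n + 1 := by ring
        rw [e]
        push_cast
        calc (ψ (K + n + 1) ^ μ)⁻¹ ≤ (ψ (K + n) ^ μ)⁻¹ + 2 * B' := h5.trans h6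
          _ ≤ ((ψ K ^ μ)⁻¹ + 2 * B' * n) + 2 * B' := by linarith
          _ = (ψ K ^ μ)⁻¹ + 2 * B' * ((n:ℝ) + 1) := by ring
    obtain ⟨E, hEdef⟩ : ∃ x : ℝ, x = max ((ψ K ^ μ)⁻¹) (2 * B') := ⟨_, rfl⟩
    have hEpos : 0 < E := by
      rw [hEdef]
      exact lt_of_lt_of_le (by positivity : (0:ℝ) < 2 * B') (le_max_right _ _)
    have hE1 : (ψ K ^ μ)⁻¹ ≤ E := by rw [hEdef]; exact le_max_left _ _
    have hE2 : 2 * B' ≤ E := by rw [hEdef]; exact le_max_right _ _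
    have hlow : ∀ i : ℕ, 1 / (E * (i + 1)) ≤ ψ (K + i) ^ μ := by
      intro i
      have h1 : (ψ (K + i) ^ μ)⁻¹ ≤ E * (i + 1) := by
        have h := hy i
        have h3 : 2 * B' * (i:ℝ) ≤ E * i :=
          mul_le_mul_of_nonneg_right hE2 (by positivity)
        calc (ψ (K + i) ^ μ)⁻¹ ≤ (ψ K ^ μ)⁻¹ + 2 * B' * i := h
          _ ≤ E + E * i := by linarith
          _ = E * (i + 1) := by ring
      have h4 : 0 < ψ (K + i) ^ μ := hψμpos _
      rw [one_div, ← inv_inv (ψ (K + i) ^ μ)]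
      exact inv_anti₀ (by positivity) h1
    -- harmonic divergence gives contradiction
    obtain ⟨n, hn⟩ : ∃ n, E * (r K / a) < ∑ i ∈ Finset.range n, (1 / (i + 1) : ℝ) := by
      have h := Real.tendsto_sum_range_one_div_nat_succ_atTop.eventually_gt_atTop
        (E * (r K / a))
      obtain ⟨n, hn⟩ := Filter.eventually_atTop.1 h
      exact ⟨n, hn n le_rfl⟩
    have hsum1 : (1 / E) * ∑ i ∈ Finset.range n, (1 / (i + 1) : ℝ)
        ≤ ∑ i ∈ Finset.range n, ψ (K + i) ^ μ := by
      rw [Finset.mul_sum]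
      apply Finset.sum_le_sum
      intro i _
      calc (1 / E) * (1 / ((i:ℝ) + 1)) = 1 / (E * (i + 1)) := by
            rw [div_mul_div_comm, one_mul]
        _ ≤ ψ (K + i) ^ μ := hlow i
    have hsum2 : a * ∑ i ∈ Finset.range n, ψ (K + i) ^ μ ≤ r K := by
      have h1 := htel n
      have h2 := hrpos (K + n)
      linarith
    have hfin : (a / E) * ∑ i ∈ Finset.range n, (1 / (i + 1) : ℝ) ≤ r K := by
      have h := le_trans (mul_le_mul_of_nonneg_left hsum1 hapos.le) hsum2
      have e : a * ((1 / E) * ∑ i ∈ Finset.range n, (1 / (i + 1) : ℝ))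
          = (a / E) * ∑ i ∈ Finset.range n, (1 / (i + 1) : ℝ) := by ring
      rw [e] at h
      exact h
    have hq : 0 < a / E := by positivity
    have h1 : (a / E) * (E * (r K / a)) < (a / E) * ∑ i ∈ Finset.range n, (1 / (i + 1) : ℝ) :=
      mul_lt_mul_of_pos_left hn hq
    have h2 : (a / E) * (E * (r K / a)) = r K := by
      field_simp
    rw [h2] at h1
    linarith
  -- conclude by induction
  obtain ⟨k0, hk0K, hk0⟩ := hbase
  refine ⟨M, hMpos, k0, ?_⟩
  intro k hk
  have h : ∀ m, k0 ≤ m → φ m ≤ M * ψ m := by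
    intro m hm
    induction m, hm using Nat.le_induction with
    | base => exact hk0
    | succ m hm ih => exact hmain m (hk0K.trans hm) ih
  have := h k hk
  rwa [hψdef] at this
end

section
/- Let $\{\gamma_k\}$ be a positive nonincreasing sequence, $\eta \in [1/2,1)$, $\mu \in (0,1]$, with $\gamma_k \to 0$. Suppose the nonnegative sequence $\{\phi_k\}$ satisfies $\phi_{k+1} \le \phi_k \max\{\eta, 1 - \phi_k^{\mu}\} + \gamma_k$ for all $k$. Then there exists $k_0 \ge 1$ such that $\phi_{k_0} \le (1-\eta)^{1/\mu}$ and $\gamma_{k_0} \le \eta(1-\eta)^{1+1/\mu}$. -/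
/-- Step 1: eventually `φ` enters the region `[0, (1-η)^(1/μ)]`
while `γ` is below `η * (1-η)^(1+1/μ)` at the same index. -/
theorem stmt2 (γ φ : ℕ → ℝ) (η μ : ℝ)
    (hη : 1 / 2 ≤ η) (hη' : η < 1) (hμ : 0 < μ) (hμ' : μ ≤ 1)
    (hγpos : ∀ k, 0 < γ k) (hγmono : ∀ k, γ (k + 1) ≤ γ k)
    (hγ0 : Filter.Tendsto γ Filter.atTop (nhds 0))
    (hφ : ∀ k, 0 ≤ φ k)
    (hrec : ∀ k, φ (k + 1) ≤ φ k * max η (1 - φ k ^ μ) + γ k) :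
    ∃ k₀ : ℕ, 1 ≤ k₀ ∧ φ k₀ ≤ (1 - η) ^ (1 / μ) ∧
      γ k₀ ≤ η * (1 - η) ^ (1 + 1 / μ) := by
  have hη0 : 0 < η := lt_of_lt_of_le (by norm_num) hη
  have h1η : (0:ℝ) < 1 - η := by linarith
  set ε : ℝ := (1 - η) ^ (1 / μ) with hε
  have hεpos : 0 < ε := Real.rpow_pos_of_pos h1η _
  set δ : ℝ := η * (1 - η) ^ (1 + 1 / μ) with hδ
  have hδpos : 0 < δ := mul_pos hη0 (Real.rpow_pos_of_pos h1η _)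
  set c : ℝ := min δ ((1 - η) * ε / 2) with hc
  have hcpos : 0 < c := lt_min hδpos (by positivity)
  -- choose N₀ past which γ < c
  have hev : ∀ᶠ k in Filter.atTop, γ k < c := by
    have := hγ0.eventually (eventually_lt_nhds hcpos)
    simpa using this
  obtain ⟨N₀, hN₀⟩ := hev.exists_forall_of_atTop
  set N : ℕ := max N₀ 1 with hN
  have hγN : ∀ k ≥ N, γ k < c := fun k hk => hN₀ k (le_trans (le_max_left _ _) hk)
  -- key step: if φ k ≥ ε then φ (k+1) ≤ η * φ k + γ k
  have hstep : ∀ k, ε ≤ φ k → φ (k + 1) ≤ η * φ k + γ k := by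
    intro k hk
    have hpow : 1 - η ≤ φ k ^ μ := by
      have := Real.rpow_le_rpow (le_of_lt hεpos) hk (le_of_lt hμ)
      calc 1 - η = ε ^ μ := by
            rw [hε, ← Real.rpow_mul h1η.le, one_div,
              inv_mul_cancel₀ (ne_of_gt hμ), Real.rpow_one]
        _ ≤ φ k ^ μ := this
    have hmax : max η (1 - φ k ^ μ) = η := max_eq_left (by linarith)
    have := hrec k
    rw [hmax] at this
    linarith [this]
  -- by contradiction, suppose φ (N+n) > ε for all n
  by_contra hcon
  push_neg at hcon
  have hφbig : ∀ n, ε < φ (N + n) := by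
    intro n
    by_contra h
    push_neg at h
    have hN1 : 1 ≤ N + n := le_trans (le_max_right _ _) (Nat.le_add_right _ _)
    have hγle : γ (N + n) ≤ δ := le_of_lt (lt_of_lt_of_le (hγN _ (Nat.le_add_right _ _)) (min_le_left _ _))
    exact absurd (hcon _ hN1 h) (not_lt.mpr hγle)
  -- contraction estimate
  have hdecay : ∀ n, φ (N + n) - ε / 2 ≤ η ^ n * (φ N - ε / 2) := by
    intro n
    induction n with
    | zero => simp
    | succ n ih =>
      have h1 : φ (N + n + 1) ≤ η * φ (N + n) + γ (N + n) :=
        hstep _ (le_of_lt (hφbig n))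
      have h2 : γ (N + n) ≤ (1 - η) * ε / 2 :=
        le_of_lt (lt_of_lt_of_le (hγN _ (Nat.le_add_right _ _)) (min_le_right _ _))
      have h3 : φ (N + n + 1) - ε / 2 ≤ η * (φ (N + n) - ε / 2) := by nlinarith
      have h4 : η * (φ (N + n) - ε / 2) ≤ η * (η ^ n * (φ N - ε / 2)) :=
        mul_le_mul_of_nonneg_left ih (le_of_lt hη0)
      calc φ (N + (n + 1)) - ε / 2 = φ (N + n + 1) - ε / 2 := by ring_nf
        _ ≤ η * (η ^ n * (φ N - ε / 2)) := le_trans h3 h4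
        _ = η ^ (n + 1) * (φ N - ε / 2) := by ring
  -- pick n with η^n small
  have hφN : 0 < φ N := lt_trans hεpos (by simpa using hφbig 0)
  obtain ⟨n, hn⟩ := exists_pow_lt_of_lt_one (show (0:ℝ) < ε / 2 / φ N by positivity) hη'
  have h5 : η ^ n * φ N < ε / 2 := by
    rw [lt_div_iff₀ hφN] at hn
    linarith
  have h6 : η ^ n * (φ N - ε / 2) ≤ η ^ n * φ N :=
    mul_le_mul_of_nonneg_left (by linarith) (pow_nonneg (le_of_lt hη0) n)
  have := hdecay n
  have := hφbig n
  linarith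
end

section
/- Let $\eta \in [1/2, 1)$, $\mu \in (0,1]$, and let $\{\gamma_k\}$ be a positive nonincreasing sequence. Suppose that for some index $k_0$ we have $\phi_{k_0} \le (1-\eta)^{1/\mu}$ and $\gamma_{k_0} \le \eta(1-\eta)^{1+1/\mu}$, and that the nonnegative sequence $\{\phi_k\}$ satisfies $\phi_{k+1} \le \phi_k \max\{\eta, 1-\phi_k^{\mu}\} + \gamma_k$ for all $k$. Then $\phi_k \le (1-\eta)^{1/\mu}$ for all $k \ge k_0$. -/
/-!
For `1/2 ≤ η` and `μ ≤ 1` the map `f x = x * max η (1 - x ^ μ)` is monotone on `[0, ∞)`, and at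
`B = (1 - η) ^ (1 / μ)` both branches of the max agree, so `f B = η B`. Hence `φ k ≤ B` gives
`φ (k + 1) ≤ η B + γ k₀ ≤ η B + η (1 - η) B = (1 - (1 - η) ^ 2) B ≤ B`.
-/

open Set

lemma le_of_le_map_add {f : ℝ → ℝ} {φ γ : ℕ → ℝ} {B : ℝ} {k₀ : ℕ}
    (hf : MonotoneOn f (Ici 0)) (hγ : Antitone γ) (hφ : ∀ k, 0 ≤ φ k)
    (hrec : ∀ k, φ (k + 1) ≤ f (φ k) + γ k) (hB : f B + γ k₀ ≤ B) (h₀ : φ k₀ ≤ B) :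
    ∀ k ≥ k₀, φ k ≤ B := by
  intro k hk
  induction k, hk using Nat.le_induction with
  | base => exact h₀
  | succ n hn ih =>
    calc φ (n + 1) ≤ f (φ n) + γ n := hrec n
      _ ≤ f B + γ k₀ := add_le_add (hf (hφ n) ((hφ n).trans ih) ih) (hγ hn)
      _ ≤ B := hB

lemma mul_one_sub_rpow_mul_le {μ t s : ℝ} (hμ : 0 < μ) (hμ' : μ ≤ 1)
    (ht : 0 ≤ t) (ht' : t ≤ 1) (hs : 0 ≤ s) :
    t * (1 - t ^ μ * s) ≤ max (1 / 2) (1 - s) := by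
  have hsq : t ^ 2 ≤ t * t ^ μ := by
    have ht_le : t ≤ t ^ μ := by
      simpa using Real.rpow_le_rpow_of_exponent_ge' ht ht' hμ.le hμ'
    nlinarith
  -- `t - t²s ≤ max (1/2) (1 - s)`: for `s ≤ 1/2` the gap factors as `(1 - t)(1 - s(1 + t))`.
  rcases le_or_gt s (1 / 2) with hs2 | hs2
  · refine le_max_of_le_right ?_
    have hgap : 0 ≤ 1 - s * (1 + t) := by nlinarith
    nlinarith [mul_le_mul_of_nonneg_right hsq hs, mul_nonneg (sub_nonneg.mpr ht') hgap]
  · refine le_max_of_le_left ?_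
    nlinarith [mul_le_mul_of_nonneg_right hsq hs, mul_le_mul_of_nonneg_left hs2.le (sq_nonneg t),
      sq_nonneg (t - 1)]

lemma mul_one_sub_rpow_le {μ x y : ℝ} (hμ : 0 < μ) (hμ' : μ ≤ 1)
    (hx : 0 ≤ x) (hxy : x ≤ y) :
    x * (1 - x ^ μ) ≤ y * max (1 / 2) (1 - y ^ μ) := by
  rcases hx.eq_or_lt with rfl | hx0
  · rw [zero_mul]
    exact mul_nonneg hxy (le_max_of_le_left (by norm_num))
  have hy : 0 < y := hx0.trans_le hxy
  obtain ⟨t, ht, ht', rfl⟩ : ∃ t, 0 ≤ t ∧ t ≤ 1 ∧ t * y = x :=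
    ⟨x / y, by positivity, (div_le_one hy).mpr hxy, div_mul_cancel₀ x hy.ne'⟩
  calc t * y * (1 - (t * y) ^ μ) = t * (1 - t ^ μ * y ^ μ) * y := by
        rw [Real.mul_rpow ht hy.le]; ring
    _ ≤ max (1 / 2) (1 - y ^ μ) * y := by
        gcongr
        exact mul_one_sub_rpow_mul_le hμ hμ' ht ht' (Real.rpow_nonneg hy.le μ)
    _ = y * max (1 / 2) (1 - y ^ μ) := mul_comm _ _

lemma monotoneOn_mul_max_one_sub_rpow {η μ : ℝ} (hη : 1 / 2 ≤ η) (hμ : 0 < μ) (hμ' : μ ≤ 1) :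
    MonotoneOn (fun x : ℝ => x * max η (1 - x ^ μ)) (Ici 0) := by
  rintro x (hx : 0 ≤ x) y (hy : 0 ≤ y) hxy
  simp only [mul_max_of_nonneg _ _ hx, mul_max_of_nonneg _ _ hy]
  refine max_le (le_max_of_le_left (by gcongr)) ?_
  calc x * (1 - x ^ μ) ≤ y * max (1 / 2) (1 - y ^ μ) := mul_one_sub_rpow_le hμ hμ' hx hxy
    _ ≤ max (y * η) (y * (1 - y ^ μ)) := by
      rw [← mul_max_of_nonneg _ _ hy]
      gcongr

theorem stmt3_general (γ φ : ℕ → ℝ) (η μ : ℝ) (k₀ : ℕ)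
    (hη : 1 / 2 ≤ η) (hη' : η < 1) (hμ : 0 < μ) (hμ' : μ ≤ 1)
    (hγmono : ∀ k, γ (k + 1) ≤ γ k)
    (hφ : ∀ k, 0 ≤ φ k)
    (hrec : ∀ k, φ (k + 1) ≤ φ k * max η (1 - φ k ^ μ) + γ k)
    (hk₀φ : φ k₀ ≤ (1 - η) ^ (1 / μ))
    (hk₀γ : γ k₀ ≤ η * (1 - η) ^ (1 + 1 / μ)) :
    ∀ k ≥ k₀, φ k ≤ (1 - η) ^ (1 / μ) := by
  have h1η : 0 < 1 - η := by linarith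
  set B := (1 - η) ^ (1 / μ)
  have hB : 0 < B := Real.rpow_pos_of_pos h1η _
  have hBμ : B ^ μ = 1 - η := by
    rw [← Real.rpow_mul h1η.le, one_div_mul_cancel hμ.ne', Real.rpow_one]
  have hγ : γ k₀ ≤ η * (1 - η) * B := by
    rwa [Real.rpow_add h1η, Real.rpow_one, ← mul_assoc] at hk₀γ
  refine le_of_le_map_add (monotoneOn_mul_max_one_sub_rpow hη hμ hμ')
    (antitone_nat_of_succ_le hγmono) hφ hrec ?_ hk₀φ
  simp only [hBμ, sub_sub_cancel, max_self]
  nlinarith [mul_nonneg hB.le (sq_nonneg (1 - η))]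

/-- Step 2, invariance: once `φ` enters `[0, (1-η)^(1/μ)]` at an
index `k₀` where `γ k₀ ≤ η (1-η)^(1+1/μ)`, it stays in that region. -/
theorem stmt3 (γ φ : ℕ → ℝ) (η μ : ℝ) (k₀ : ℕ)
    (hη : 1 / 2 ≤ η) (hη' : η < 1) (hμ : 0 < μ) (hμ' : μ ≤ 1)
    (hγpos : ∀ k, 0 < γ k) (hγmono : ∀ k, γ (k + 1) ≤ γ k)
    (hφ : ∀ k, 0 ≤ φ k)
    (hrec : ∀ k, φ (k + 1) ≤ φ k * max η (1 - φ k ^ μ) + γ k)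
    (hk₀φ : φ k₀ ≤ (1 - η) ^ (1 / μ))
    (hk₀γ : γ k₀ ≤ η * (1 - η) ^ (1 + 1 / μ)) :
    ∀ k ≥ k₀, φ k ≤ (1 - η) ^ (1 / μ) :=
  stmt3_general γ φ η μ k₀ hη hη' hμ hμ' hγmono hφ hrec hk₀φ hk₀γ
end

section
/- Let $\lambda_k, \lambda_{k+1} > 0$ with $\lambda_{k+1} \ge \lambda_k$, let $\sigma_k \in (0, \lambda_k]$, and $z \ge 0$. Set $z' = (1 - \sigma_k/\lambda_k) z$. Then $\frac{(z)^2}{2\lambda_k} - \frac{(z')^2}{2\lambda_{k+1}} \le \frac{\lambda_{k+1} - \lambda_k}{2} \cdot \frac{z^2}{\lambda_k^2} + \sigma_k \cdot \frac{z^2}{\lambda_k^2}$. -/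
/-!
Write `ρ = 1 - σ/λₖ` for the contraction factor of the dual update and `w = z²`. The change splits
as `(w/(2λₖ) - w/(2λₖ₊₁)) + (1 - ρ²) · w/(2λₖ₊₁)`. The first part is the cost of enlarging the
parameter, at most `(λₖ₊₁ - λₖ)/2 · w/λₖ²` because `λₖ² ≤ λₖλₖ₊₁`. For the second, the identity
`1 - ρ² = 2(1 - ρ) - (1 - ρ)²` gives `1 - ρ² ≤ 2σ/λₖ`, and `λₖ ≤ λₖ₊₁` turns `σ/λₖ · w/λₖ₊₁`
into `σ · w/λₖ²`.
-/

section

variable {K : Type*} [Field K] [LinearOrder K] [IsStrictOrderedRing K]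

theorem one_sub_sq_le_two_mul_one_sub (ρ : K) : 1 - ρ ^ 2 ≤ 2 * (1 - ρ) := by
  nlinarith [sq_nonneg (1 - ρ)]

theorem div_two_mul_sub_div_two_mul_le {a b w : K} (ha : 0 < a) (hab : a ≤ b) (hw : 0 ≤ w) :
    w / (2 * a) - w / (2 * b) ≤ (b - a) / 2 * (w / a ^ 2) := by
  have hb : 0 < b := ha.trans_le hab
  have hdiff : w / (2 * a) - w / (2 * b) = (b - a) / 2 * (w / (a * b)) := by
    field_simp
  rw [hdiff]
  have hab' : a ^ 2 ≤ a * b := by rw [sq]; gcongr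
  gcongr

theorem one_sub_one_sub_div_sq_mul_le {a b s w : K} (ha : 0 < a) (hab : a ≤ b) (hs : 0 ≤ s)
    (hw : 0 ≤ w) : (1 - (1 - s / a) ^ 2) * (w / (2 * b)) ≤ s * (w / a ^ 2) := by
  have hb : 0 < b := ha.trans_le hab
  calc (1 - (1 - s / a) ^ 2) * (w / (2 * b))
      ≤ 2 * (1 - (1 - s / a)) * (w / (2 * b)) := by
        gcongr
        exact one_sub_sq_le_two_mul_one_sub _
    _ = s / a * (w / b) := by field_simp; ring
    _ ≤ s / a * (w / a) := by gcongr
    _ = s * (w / a ^ 2) := by field_simp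

end

theorem stmt13_general (lamk lamk1 sigk z : ℝ)
    (hlamk : 0 < lamk) (hmono : lamk ≤ lamk1)
    (hsig : 0 < sigk) :
    z ^ 2 / (2 * lamk) - ((1 - sigk / lamk) * z) ^ 2 / (2 * lamk1) ≤
      (lamk1 - lamk) / 2 * (z ^ 2 / lamk ^ 2) + sigk * (z ^ 2 / lamk ^ 2) := by
  have hsplit : z ^ 2 / (2 * lamk) - ((1 - sigk / lamk) * z) ^ 2 / (2 * lamk1) =
      (z ^ 2 / (2 * lamk) - z ^ 2 / (2 * lamk1)) +
        (1 - (1 - sigk / lamk) ^ 2) * (z ^ 2 / (2 * lamk1)) := by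
    ring
  rw [hsplit]
  exact add_le_add (div_two_mul_sub_div_two_mul_le hlamk hmono (sq_nonneg z))
    (one_sub_one_sub_div_sq_mul_le hlamk hmono hsig.le (sq_nonneg z))

/-- Case III estimate for the change in the penalty term. -/
theorem stmt13 (lamk lamk1 sigk z : ℝ)
    (hlamk : 0 < lamk) (hlamk1 : 0 < lamk1) (hmono : lamk ≤ lamk1)
    (hsig : 0 < sigk) (hsig' : sigk ≤ lamk) (hz : 0 ≤ z) :
    z ^ 2 / (2 * lamk) - ((1 - sigk / lamk) * z) ^ 2 / (2 * lamk1) ≤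
      (lamk1 - lamk) / 2 * (z ^ 2 / lamk ^ 2) + sigk * (z ^ 2 / lamk ^ 2) :=
  stmt13_general lamk lamk1 sigk z hlamk hmono hsig
end

section
/- Let $F : \mathbb{R}^n \to \mathbb{R}$ be differentiable with $L$-Lipschitz gradient ($L > 0$), $h$ proper convex, $x, v \in \operatorname{dom} h$ with $v \ne x$, and let $G = \langle \nabla F(x), x - v \rangle + h(x) - h(v) > 0$. Define the short stepsize $\alpha = \min\{1, G/(L\|v-x\|^2)\}$ and $x^+ = x + \alpha(v-x)$. Then $F(x^+) + h(x^+) \le F(x) + h(x) - \frac{G}{2}\min\{1, G/(L\|v-x\|^2)\}$. -/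
/-!
Along the segment from `x` to `v`, the Lipschitz gradient gives the quadratic upper bound
`F (x + α • (v - x)) ≤ F x - α ⟪∇F x, x - v⟫ + L α² ‖v - x‖² / 2`, and convexity of `h` gives
`h (x + α • (v - x)) ≤ h x - α (h x - h v)`, so the step decreases `F + h` by at least
`α G - L α² ‖v - x‖² / 2`. The short stepsize `α = min 1 (G / (L ‖v - x‖²))` satisfies
`α L ‖v - x‖² ≤ G`, so the quadratic term eats at most half of the linear gain `α G`.
-/

open RealInnerProductSpace

section Descent

variable {E : Type*} [NormedAddCommGroup E] [InnerProductSpace ℝ E]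
  {F : E → ℝ} {F' : E → E} {L : ℝ}

lemma hasDerivAt_comp_add_smul [CompleteSpace E] (hF : ∀ x, HasGradientAt F (F' x) x)
    (x d : E) (t : ℝ) :
    HasDerivAt (fun t : ℝ => F (x + t • d)) ⟪F' (x + t • d), d⟫ t := by
  have hline : HasDerivAt (fun t : ℝ => x + t • d) d t := by
    simpa using ((hasDerivAt_id t).smul_const d).const_add x
  exact (hF (x + t • d)).hasFDerivAt.comp_hasDerivAt t hline

lemma inner_sub_gradient_le (hLip : ∀ x y, ‖F' x - F' y‖ ≤ L * ‖x - y‖) (x d : E) {t : ℝ}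
    (ht : 0 ≤ t) : ⟪F' (x + t • d), d⟫ - ⟪F' x, d⟫ ≤ L * t * ‖d‖ ^ 2 :=
  calc ⟪F' (x + t • d), d⟫ - ⟪F' x, d⟫ = ⟪F' (x + t • d) - F' x, d⟫ := (inner_sub_left ..).symm
    _ ≤ ‖F' (x + t • d) - F' x‖ * ‖d‖ := real_inner_le_norm _ _
    _ ≤ L * ‖(x + t • d) - x‖ * ‖d‖ := by gcongr; exact hLip _ _
    _ = L * t * ‖d‖ ^ 2 := by
      rw [add_sub_cancel_left, norm_smul, Real.norm_of_nonneg ht]; ring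

theorem le_add_inner_add_sq_of_lipschitz_gradient [CompleteSpace E]
    (hF : ∀ x, HasGradientAt F (F' x) x)
    (hLip : ∀ x y, ‖F' x - F' y‖ ≤ L * ‖x - y‖) (x d : E) :
    F (x + d) ≤ F x + ⟪F' x, d⟫ + L / 2 * ‖d‖ ^ 2 := by
  set φ : ℝ → ℝ := fun t => F (x + t • d) - t * ⟪F' x, d⟫ - L / 2 * t ^ 2 * ‖d‖ ^ 2
  have hφ : ∀ t, HasDerivAt φ (⟪F' (x + t • d), d⟫ - ⟪F' x, d⟫ - L * t * ‖d‖ ^ 2) t := by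
    intro t
    have hquad := ((hasDerivAt_pow 2 t).const_mul (L / 2)).mul_const (‖d‖ ^ 2)
    refine (((hasDerivAt_comp_add_smul hF x d t).sub
      ((hasDerivAt_id t).mul_const ⟪F' x, d⟫)).sub hquad).congr_deriv ?_
    simp only [one_mul, Nat.cast_ofNat]; ring
  have hanti : φ 1 ≤ φ 0 := by
    refine antitoneOn_of_deriv_nonpos (convex_Icc 0 1)
      (fun t _ => (hφ t).continuousAt.continuousWithinAt)
      (fun t _ => (hφ t).differentiableAt.differentiableWithinAt) (fun t ht => ?_)
      (Set.left_mem_Icc.2 zero_le_one) (Set.right_mem_Icc.2 zero_le_one) zero_le_one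
    rw [interior_Icc] at ht
    rw [(hφ t).deriv, sub_nonpos]
    exact inner_sub_gradient_le hLip x d ht.1.le
  simp only [φ, one_smul, zero_smul, add_zero, one_pow, one_mul, zero_mul, sub_zero] at hanti
  linarith

theorem add_le_sub_gap_of_segment_step [CompleteSpace E] (hF : ∀ x, HasGradientAt F (F' x) x)
    (hLip : ∀ x y, ‖F' x - F' y‖ ≤ L * ‖x - y‖) {s : Set E} {h : E → ℝ} (hconv : ConvexOn ℝ s h)
    {x v : E} (hx : x ∈ s) (hv : v ∈ s) {α : ℝ} (hα0 : 0 ≤ α) (hα1 : α ≤ 1) :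
    F (x + α • (v - x)) + h (x + α • (v - x)) ≤
      F x + h x - α * (⟪F' x, x - v⟫ + h x - h v) + L / 2 * α ^ 2 * ‖v - x‖ ^ 2 := by
  have hFstep := le_add_inner_add_sq_of_lipschitz_gradient hF hLip x (α • (v - x))
  have hinner : ⟪F' x, v - x⟫ = -⟪F' x, x - v⟫ := by rw [← inner_neg_right, neg_sub]
  rw [real_inner_smul_right, hinner, norm_smul, Real.norm_of_nonneg hα0] at hFstep
  have hhstep : h (x + α • (v - x)) ≤ (1 - α) * h x + α * h v := by
    have hcomb : x + α • (v - x) = (1 - α) • x + α • v := by module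
    rw [hcomb]
    exact hconv.2 hx hv (by linarith) hα0 (by ring)
  linear_combination hFstep + hhstep

end Descent

lemma min_one_div_mul_le {G c : ℝ} (hG : 0 ≤ G) (hc : 0 ≤ c) : min 1 (G / c) * c ≤ G := by
  rcases hc.eq_or_lt with rfl | hc
  · simpa using hG
  · calc min 1 (G / c) * c ≤ G / c * c := by gcongr; exact min_le_right _ _
      _ = G := div_mul_cancel₀ _ hc.ne'

lemma short_step_quadratic_le {G c : ℝ} (hG : 0 ≤ G) (hc : 0 ≤ c) :
    -(min 1 (G / c) * G) + c / 2 * min 1 (G / c) ^ 2 ≤ -(G / 2 * min 1 (G / c)) := by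
  have hα0 : 0 ≤ min 1 (G / c) := le_min zero_le_one (div_nonneg hG hc)
  nlinarith [mul_le_mul_of_nonneg_left (min_one_div_mul_le hG hc) hα0]

theorem stmt16_general (n : ℕ) (F : EuclideanSpace ℝ (Fin n) → ℝ)
    (F' : EuclideanSpace ℝ (Fin n) → EuclideanSpace ℝ (Fin n)) (L : ℝ) (hL : 0 < L)
    (hFdiff : ∀ x, HasGradientAt F (F' x) x)
    (hLip : ∀ x y, ‖F' x - F' y‖ ≤ L * ‖x - y‖)
    (s : Set (EuclideanSpace ℝ (Fin n)))
    (h : EuclideanSpace ℝ (Fin n) → ℝ) (hconv : ConvexOn ℝ s h)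
    (x v : EuclideanSpace ℝ (Fin n)) (hx : x ∈ s) (hv : v ∈ s)
    (G : ℝ) (hG : G = ⟪F' x, x - v⟫ + h x - h v) (hGpos : 0 < G) :
    F (x + min 1 (G / (L * ‖v - x‖ ^ 2)) • (v - x)) +
        h (x + min 1 (G / (L * ‖v - x‖ ^ 2)) • (v - x)) ≤
      F x + h x - G / 2 * min 1 (G / (L * ‖v - x‖ ^ 2)) := by
  have hc : 0 ≤ L * ‖v - x‖ ^ 2 := by positivity
  have hα0 : 0 ≤ min 1 (G / (L * ‖v - x‖ ^ 2)) := le_min zero_le_one (div_nonneg hGpos.le hc)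
  have hstep := add_le_sub_gap_of_segment_step hFdiff hLip hconv hx hv hα0 (min_le_left _ _)
  rw [← hG] at hstep
  linear_combination hstep + short_step_quadratic_le hGpos.le hc

/-- one-iteration progress of the conditional gradient method with
the short (adaptive) stepsize on the composite objective `F + h`. -/
theorem stmt16 (n : ℕ) (F : EuclideanSpace ℝ (Fin n) → ℝ)
    (F' : EuclideanSpace ℝ (Fin n) → EuclideanSpace ℝ (Fin n)) (L : ℝ) (hL : 0 < L)
    (hFdiff : ∀ x, HasGradientAt F (F' x) x)
    (hLip : ∀ x y, ‖F' x - F' y‖ ≤ L * ‖x - y‖)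
    (s : Set (EuclideanSpace ℝ (Fin n)))
    (h : EuclideanSpace ℝ (Fin n) → ℝ) (hconv : ConvexOn ℝ s h)
    (x v : EuclideanSpace ℝ (Fin n)) (hx : x ∈ s) (hv : v ∈ s) (hne : v ≠ x)
    (G : ℝ) (hG : G = ⟪F' x, x - v⟫ + h x - h v) (hGpos : 0 < G) :
    F (x + min 1 (G / (L * ‖v - x‖ ^ 2)) • (v - x)) +
        h (x + min 1 (G / (L * ‖v - x‖ ^ 2)) • (v - x)) ≤
      F x + h x - G / 2 * min 1 (G / (L * ‖v - x‖ ^ 2)) :=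
  stmt16_general n F F' L hL hFdiff hLip s h hconv x v hx hv G hG hGpos
end
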